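/- Let A ⊆ ℝ^d be a measurable set, x ∈ ℝ^d, q ∈ (0,1), and suppose μ_x(A) ≤ q. Then for every δ ∈ ℝ^d, μ_{x+δ}(A) ≤ Φ(Φ⁻¹(q) + ‖δ‖₂/σ). -/

import Mathlib

/-!
Rescaling writes `μ_x` as the image of the standard Gaussian `γ` under `z ↦ x + σ • z`, which
turns the claim into `γ(B - v) ≤ Φ(t + ‖v‖)` whenever `γ(B) ≤ Φ(t)`, with `v = δ / σ`. By the
Cameron–Martin formula the shifted measure `γ(· - v)` has density `exp(⟪v, z⟫ - ‖v‖² / 2)`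
with respect to `γ`, a monotone function of `⟪v, z⟫`. Hence (Neyman–Pearson) among sets of
`γ`-mass at most `Φ(t)` the half-space `{⟪v, z⟫ ≥ -‖v‖ t}`, of `γ`-mass exactly `Φ(t)`, has the
largest shifted mass; as `⟪v, ·⟫` is Gaussian under both measures, that mass is `Φ(t + ‖v‖)`.
-/

open MeasureTheory ProbabilityTheory
open scoped RealInnerProductSpace

/-- `Phi` : cumulative distribution function of the standard real Gaussian N(0,1). -/
noncomputable def Phi : ℝ → ℝ := fun t => ((gaussianReal 0 1) (Set.Iic t)).toReal

/-- `PhiInv` : the standard Gaussian quantile function, inverse of `Phi` on (0,1). -/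
noncomputable def PhiInv : ℝ → ℝ := Function.invFun Phi

/-- `gaussPi d σ x` : the isotropic Gaussian measure on ℝ^d with mean `x` and covariance σ²I,
i.e. the product measure whose i-th factor is the real Gaussian with mean `x i`, variance σ². -/
noncomputable def gaussPi (d : ℕ) (σ : ℝ) (x : EuclideanSpace ℝ (Fin d)) :
    Measure (EuclideanSpace ℝ (Fin d)) :=
  Measure.map (WithLp.toLp 2) (Measure.pi fun i => gaussianReal (x i) ⟨σ ^ 2, sq_nonneg σ⟩)

open scoped NNReal ENNReal

lemma Phi_eq_cdf : Phi = cdf (gaussianReal 0 1) := by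
  funext t
  rw [Phi, cdf_eq_real, measureReal_def]

lemma continuous_Phi : Continuous Phi := by
  rw [Phi_eq_cdf, continuous_iff_continuousAt]
  intro t
  have hleft : Function.leftLim (cdf (gaussianReal 0 1)) t = cdf (gaussianReal 0 1) t := by
    have := nullSingletonClass_gaussianReal (μ := 0) one_ne_zero
    have h := (cdf (gaussianReal 0 1)).measure_singleton t
    rw [measure_cdf, measure_singleton, eq_comm, ENNReal.ofReal_eq_zero] at h
    exact le_antisymm ((monotone_cdf _).leftLim_le le_rfl) (by linarith)
  rw [(monotone_cdf _).continuousAt_iff_leftLim_eq_rightLim, hleft,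
    StieltjesFunction.rightLim_eq]

lemma Phi_PhiInv {q : ℝ} (hq : q ∈ Set.Ioo (0 : ℝ) 1) : Phi (PhiInv q) = q := by
  refine Function.invFun_eq (mem_range_of_exists_le_of_exists_ge continuous_Phi ?_ ?_)
  · rw [Phi_eq_cdf]
    exact ((tendsto_cdf_atBot _).eventually (eventually_le_nhds hq.1)).exists
  · rw [Phi_eq_cdf]
    exact ((tendsto_cdf_atTop _).eventually (eventually_ge_nhds hq.2)).exists

lemma gaussianReal_map_const_add_mul (m s : ℝ) :
    (gaussianReal 0 1).map (fun t => m + s * t) = gaussianReal m ⟨s ^ 2, sq_nonneg s⟩ := by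
  rw [show (fun t => m + s * t) = (m + ·) ∘ (s * ·) from rfl,
    ← Measure.map_map (measurable_const_add m) (measurable_const_mul s),
    gaussianReal_map_const_mul, gaussianReal_map_const_add]
  congr 1
  · ring
  · exact mul_one _

lemma gaussianReal_real_Iic {s : ℝ≥0} (hs : 0 < s) (m a : ℝ) :
    (gaussianReal m (s ^ 2)).real (Set.Iic a) = Phi ((a - m) / s) := by
  have hvar : s ^ 2 = ⟨(s : ℝ) ^ 2, sq_nonneg _⟩ := NNReal.eq (NNReal.coe_pow s 2)
  rw [hvar, ← gaussianReal_map_const_add_mul, measureReal_def,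
    Measure.map_apply (by fun_prop) measurableSet_Iic, Phi]
  congr 3
  ext t
  simp only [Set.mem_preimage, Set.mem_Iic, le_div_iff₀ (NNReal.coe_pos.2 hs)]
  constructor <;> intro h <;> linarith

lemma gaussianReal_add_eq_withDensity (m c : ℝ) {v : ℝ≥0} (hv : v ≠ 0) :
    gaussianReal (m + c) v = (gaussianReal m v).withDensity
      (fun t => ENNReal.ofReal (Real.exp ((c * (t - m) - c ^ 2 / 2) / v))) := by
  rw [gaussianReal_of_var_ne_zero _ hv, gaussianReal_of_var_ne_zero _ hv,
    ← withDensity_mul _ (measurable_gaussianPDF m v) (by fun_prop)]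
  congr 1
  funext t
  simp only [Pi.mul_apply, gaussianPDF, gaussianPDFReal]
  rw [← ENNReal.ofReal_mul (by positivity), mul_assoc _ (Real.exp _), ← Real.exp_add]
  congr 3
  have : (v : ℝ) ≠ 0 := by exact_mod_cast hv
  field_simp
  ring

lemma MeasureTheory.Measure.pi_withDensity {ι : Type*} [Fintype ι] {α : ι → Type*}
    [∀ i, MeasurableSpace (α i)] (μ : ∀ i, Measure (α i)) [∀ i, IsProbabilityMeasure (μ i)]
    {f : ∀ i, α i → ℝ≥0∞} (hf : ∀ i, Measurable (f i))
    [∀ i, SigmaFinite ((μ i).withDensity (f i))] :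
    Measure.pi (fun i => (μ i).withDensity (f i))
      = (Measure.pi μ).withDensity (fun y => ∏ i, f i (y i)) := by
  refine Measure.pi_eq fun s hs => ?_
  have hbox : MeasurableSet (Set.univ.pi s) := MeasurableSet.univ_pi hs
  have hind : (Set.univ.pi s).indicator (fun y => ∏ i, f i (y i))
      = fun y => ∏ i, (s i).indicator (f i) (y i) := by
    funext y
    by_cases hy : ∀ i, y i ∈ s i
    · rw [Set.indicator_of_mem (Set.mem_univ_pi.2 hy)]
      exact Finset.prod_congr rfl fun i _ => (Set.indicator_of_mem (hy i) _).symm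
    · obtain ⟨i, hi⟩ := not_forall.1 hy
      rw [Set.indicator_of_notMem (mt Set.mem_univ_pi.1 hy)]
      exact (Finset.prod_eq_zero (Finset.mem_univ i) (Set.indicator_of_notMem hi _)).symm
  rw [withDensity_apply _ hbox, ← lintegral_indicator hbox, hind,
    lintegral_prod_eq_prod_lintegral_of_indepFun _ _
      (iIndepFun_pi fun i => ((hf i).indicator (hs i)).aemeasurable)
      fun i => ((hf i).indicator (hs i)).comp (measurable_pi_apply i)]
  refine Finset.prod_congr rfl fun i _ => ?_
  rw [withDensity_apply _ (hs i), ← lintegral_indicator (hs i),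
    ← (measurePreserving_eval μ i).lintegral_comp ((hf i).indicator (hs i))]

lemma map_withDensity_comp {α β : Type*} [MeasurableSpace α] [MeasurableSpace β]
    (μ : Measure α) {f : α → β} (hf : Measurable f) {g : β → ℝ≥0∞} (hg : Measurable g) :
    (μ.withDensity (g ∘ f)).map f = (μ.map f).withDensity g := by
  ext s hs
  rw [Measure.map_apply hf hs, withDensity_apply _ (hf hs), withDensity_apply _ hs,
    setLIntegral_map hs hg hf]
  rfl

lemma withDensity_apply_le_of_threshold {α : Type*} [MeasurableSpace α] {μ : Measure α}
    [IsFiniteMeasure μ] {A H : Set α} (hA : MeasurableSet A) (hH : MeasurableSet H)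
    (hAH : μ A ≤ μ H) {f : α → ℝ≥0∞} {c : ℝ≥0∞} (hf_ge : ∀ y ∈ H, c ≤ f y)
    (hf_le : ∀ y ∉ H, f y ≤ c) :
    μ.withDensity f A ≤ μ.withDensity f H := by
  have hdiff : μ (A \ H) ≤ μ (H \ A) := by
    rw [← measure_inter_add_sdiff A hH, ← measure_inter_add_sdiff H hA, Set.inter_comm H] at hAH
    exact (ENNReal.add_le_add_iff_left (measure_ne_top μ _)).1 hAH
  have hsdiff : μ.withDensity f (A \ H) ≤ μ.withDensity f (H \ A) :=
    calc μ.withDensity f (A \ H) ≤ c * μ (A \ H) := by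
          rw [withDensity_apply _ (hA.diff hH), ← setLIntegral_const]
          exact setLIntegral_mono' (hA.diff hH) fun y hy => hf_le y hy.2
      _ ≤ c * μ (H \ A) := by gcongr
      _ ≤ μ.withDensity f (H \ A) := by
          rw [withDensity_apply _ (hH.diff hA), ← setLIntegral_const]
          exact setLIntegral_mono' (hH.diff hA) fun y hy => hf_ge y hy.1
  rw [← measure_inter_add_sdiff A hH, ← measure_inter_add_sdiff H hA, Set.inter_comm H]
  gcongr

lemma stdGaussian_map_inner {E : Type*} [NormedAddCommGroup E] [InnerProductSpace ℝ E]
    [FiniteDimensional ℝ E] [MeasurableSpace E] [BorelSpace E] (w : E) :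
    (stdGaussian E).map (fun z => ⟪w, z⟫) = gaussianReal 0 (‖w‖₊ ^ 2) := by
  have h := IsGaussian.map_eq_gaussianReal (μ := stdGaussian E) (innerSL ℝ w)
  rw [integral_strongDual_stdGaussian, variance_dual_stdGaussian, innerSL_apply_norm] at h
  rw [show (fun z => ⟪w, z⟫) = ⇑(innerSL ℝ w) from rfl, h]
  congr
  ext
  simp

lemma stdGaussian_map_add_real_halfspace {E : Type*} [NormedAddCommGroup E]
    [InnerProductSpace ℝ E] [FiniteDimensional ℝ E] [MeasurableSpace E] [BorelSpace E]
    (u : E) {w : E} (hw : w ≠ 0) (a : ℝ) :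
    ((stdGaussian E).map (· + u)).real {z | ⟪w, z⟫ ≤ a} = Phi ((a - ⟪w, u⟫) / ‖w‖) := by
  have hlaw : ((stdGaussian E).map (· + u)).map (fun z => ⟪w, z⟫)
      = gaussianReal ⟪w, u⟫ (‖w‖₊ ^ 2) := by
    have hcomp : (fun z => ⟪w, z⟫) ∘ (· + u) = (· + ⟪w, u⟫) ∘ fun z => ⟪w, z⟫ := by
      funext z
      simp [inner_add_right]
    rw [Measure.map_map (by fun_prop) (by fun_prop), hcomp,
      ← Measure.map_map (by fun_prop) (by fun_prop), stdGaussian_map_inner,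
      gaussianReal_map_add_const, zero_add]
  rw [show {z | ⟪w, z⟫ ≤ a} = (fun z => ⟪w, z⟫) ⁻¹' Set.Iic a from rfl,
    ← map_measureReal_apply (by fun_prop) measurableSet_Iic, hlaw,
    gaussianReal_real_Iic (nnnorm_pos.2 hw), coe_nnnorm]

section EuclideanSpace

variable {ι : Type*} [Fintype ι]

lemma stdGaussian_map_add_eq_withDensity (v : EuclideanSpace ℝ ι) :
    (stdGaussian (EuclideanSpace ℝ ι)).map (· + v) = (stdGaussian (EuclideanSpace ℝ ι)).withDensity
      (fun z => ENNReal.ofReal (Real.exp (⟪v, z⟫ - ‖v‖ ^ 2 / 2))) := by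
  set ρ : ι → ℝ → ℝ≥0∞ := fun i t => ENNReal.ofReal (Real.exp (v i * t - v i ^ 2 / 2))
  have hcoord : ∀ i, (gaussianReal 0 1).map (· + v i) = (gaussianReal 0 1).withDensity (ρ i) := by
    intro i
    rw [gaussianReal_map_add_const, gaussianReal_add_eq_withDensity 0 (v i) one_ne_zero]
    simp [ρ]
  have hshift : (· + v) ∘ WithLp.toLp 2 = WithLp.toLp 2 ∘ fun (y : ι → ℝ) i => y i + v i := by
    funext y
    ext i
    simp
  have hprod : (fun y : ι → ℝ => ∏ i, ρ i (y i))
      = (fun z => ENNReal.ofReal (Real.exp (⟪v, z⟫ - ‖v‖ ^ 2 / 2))) ∘ WithLp.toLp 2 := by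
    funext y
    rw [Function.comp_apply, ← ENNReal.ofReal_prod_of_nonneg fun i _ => (Real.exp_pos _).le,
      ← Real.exp_sum, EuclideanSpace.real_norm_sq_eq, PiLp.inner_apply]
    congr 2
    simp [Finset.sum_sub_distrib, Finset.sum_div, mul_comm]
  rw [← map_pi_eq_stdGaussian, Measure.map_map (measurable_add_const v) (by fun_prop), hshift,
    ← Measure.map_map (by fun_prop) (by fun_prop),
    Measure.pi_map_pi fun i => (measurable_add_const (v i)).aemeasurable, funext hcoord,
    Measure.pi_withDensity _ fun i => by fun_prop, hprod,
    map_withDensity_comp _ (by fun_prop) (by fun_prop)]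

theorem stdGaussian_map_add_real_le_Phi {B : Set (EuclideanSpace ℝ ι)} (hB : MeasurableSet B)
    (v : EuclideanSpace ℝ ι) {t : ℝ} (h : (stdGaussian (EuclideanSpace ℝ ι)).real B ≤ Phi t) :
    ((stdGaussian (EuclideanSpace ℝ ι)).map (· + v)).real B ≤ Phi (t + ‖v‖) := by
  rcases eq_or_ne v 0 with rfl | hv
  · simpa using h
  set γ := stdGaussian (EuclideanSpace ℝ ι)
  set H := {z : EuclideanSpace ℝ ι | ⟪-v, z⟫ ≤ ‖v‖ * t}
  have hH : MeasurableSet H := measurableSet_le (by fun_prop) (by fun_prop)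
  have hnv : ‖v‖ ≠ 0 := norm_ne_zero_iff.2 hv
  have hγH : γ.real H = Phi t := by
    have h0 := stdGaussian_map_add_real_halfspace 0 (neg_ne_zero.2 hv) (‖v‖ * t)
    simp only [add_zero, Measure.map_id', inner_zero_right, sub_zero, norm_neg] at h0
    rwa [mul_div_cancel_left₀ _ hnv] at h0
  have hshiftH : (γ.map (· + v)).real H = Phi (t + ‖v‖) := by
    rw [stdGaussian_map_add_real_halfspace v (neg_ne_zero.2 hv), norm_neg, inner_neg_left,
      real_inner_self_eq_norm_sq]
    congr 1
    field_simp
    ring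
  have hBH : γ B ≤ γ H :=
    (ENNReal.toReal_le_toReal (measure_ne_top _ _) (measure_ne_top _ _)).1 (h.trans hγH.ge)
  have key : γ.map (· + v) B ≤ γ.map (· + v) H := by
    rw [stdGaussian_map_add_eq_withDensity]
    refine withDensity_apply_le_of_threshold hB hH hBH
      (c := ENNReal.ofReal (Real.exp (-(‖v‖ * t) - ‖v‖ ^ 2 / 2))) (fun z hz => ?_) fun z hz => ?_
    · have : -(‖v‖ * t) ≤ ⟪v, z⟫ := by
        rw [Set.mem_ofPred_eq, inner_neg_left] at hz
        linarith
      gcongr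
    · have : ⟪v, z⟫ ≤ -(‖v‖ * t) := by
        rw [Set.mem_ofPred_eq, inner_neg_left, not_le] at hz
        linarith
      gcongr
  rw [← hshiftH]
  exact ENNReal.toReal_mono (measure_ne_top _ _) key

end EuclideanSpace

lemma gaussPi_eq_map_stdGaussian (d : ℕ) (σ : ℝ) (x : EuclideanSpace ℝ (Fin d)) :
    gaussPi d σ x = (stdGaussian (EuclideanSpace ℝ (Fin d))).map (fun z => x + σ • z) := by
  have hcomm : (fun z => x + σ • z) ∘ WithLp.toLp 2
      = WithLp.toLp 2 ∘ fun (y : Fin d → ℝ) i => x i + σ * y i := by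
    funext y
    ext i
    simp
  rw [gaussPi, ← map_pi_eq_stdGaussian, Measure.map_map (by fun_prop) (by fun_prop), hcomm,
    ← Measure.map_map (by fun_prop) (by fun_prop),
    Measure.pi_map_pi fun i => (by fun_prop : Measurable fun t => x i + σ * t).aemeasurable]
  simp_rw [gaussianReal_map_const_add_mul]

/-- Gaussian shift upper bound (dual of the lower bound): if `μ_x(A) ≤ q` then for every
shift `δ`, `μ_{x+δ}(A) ≤ Φ(Φ⁻¹(q) + ‖δ‖₂/σ)`. -/
theorem gaussian_shift_upper_bound
    {d : ℕ} {σ : ℝ} (hσ : 0 < σ)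
    (A : Set (EuclideanSpace ℝ (Fin d))) (hA : MeasurableSet A)
    (x : EuclideanSpace ℝ (Fin d)) (q : ℝ) (hq : q ∈ Set.Ioo (0 : ℝ) 1)
    (h : (gaussPi d σ x A).toReal ≤ q) :
    ∀ δ : EuclideanSpace ℝ (Fin d),
      (gaussPi d σ (x + δ) A).toReal ≤ Phi (PhiInv q + ‖δ‖ / σ) := by
  intro δ
  set γ := stdGaussian (EuclideanSpace ℝ (Fin d))
  have hscale : Measurable fun z : EuclideanSpace ℝ (Fin d) => x + σ • z := by fun_prop
  have hshift : gaussPi d σ (x + δ) = (γ.map (· + σ⁻¹ • δ)).map (fun z => x + σ • z) := by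
    rw [gaussPi_eq_map_stdGaussian, Measure.map_map hscale (measurable_add_const _)]
    congr 1
    funext z
    rw [Function.comp_apply, smul_add, smul_inv_smul₀ hσ.ne']
    abel
  rw [gaussPi_eq_map_stdGaussian, Measure.map_apply hscale hA, ← Phi_PhiInv hq] at h
  rw [hshift, Measure.map_apply hscale hA]
  have := stdGaussian_map_add_real_le_Phi (hscale hA) (σ⁻¹ • δ) h
  rwa [norm_smul, norm_inv, Real.norm_of_nonneg hσ.le, inv_mul_eq_div] at this
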